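/- Let μ̂ = (1/n) Σᵢ Xᵢ ⊗ Xᵢ with ‖Xᵢ‖ = 1 in a Hilbert space H, and suppose the largest eigenvalue δ̂₁² of μ̂ is simple with unit eigenvector γ̂. Then γ̂ ⊗ γ̂ is the unique minimizer, over rank-one orthogonal projections Q, of ‖Q - μ̂‖_{HS}; i.e., the projective point [γ̂] is the (unique) Veronese–Whitney sample mean. -/

import Mathlib

open scoped RealInnerProductSpace

/-- if the largest eigenvalue of `μ̂ = (1/n) Σᵢ Xᵢ ⊗ Xᵢ` is
simple with unit eigenvector `γ̂`, then `γ̂ ⊗ γ̂` is the unique minimizer, over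
rank-one orthogonal projections `γ ⊗ γ`, of the Hilbert–Schmidt distance to
`μ̂`; i.e. `[γ̂]` is the unique Veronese–Whitney sample mean.  The space of
HS operators is modeled by `E`, with `T u v` representing `u ⊗ v`. -/
theorem vw_sample_mean_unique_minimizer
    {H E : Type*} [NormedAddCommGroup H] [InnerProductSpace ℝ H]
    [NormedAddCommGroup E] [InnerProductSpace ℝ E]
    (T : H →L[ℝ] H →L[ℝ] E)
    (hT : ∀ u v u' v' : H, ⟪T u v, T u' v'⟫ = ⟪u, u'⟫ * ⟪v', v⟫)
    {n : ℕ} (hn : 0 < n) (X : Fin n → H) (hX : ∀ i, ‖X i‖ = 1)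
    (μhatE : E) (hμE : μhatE = (n : ℝ)⁻¹ • ∑ i, T (X i) (X i))
    (μhat : H →L[ℝ] H)
    (hμ : μhat = (n : ℝ)⁻¹ • ∑ i, (innerSL ℝ (X i)).smulRight (X i))
    (d₁ : ℝ) (γhat : H) (hγhat : ‖γhat‖ = 1)
    (heig : μhat γhat = d₁ • γhat)
    (hsimple : ∀ γ : H, ‖γ‖ = 1 → ⟪γ, γhat⟫ = 0 → ⟪μhat γ, γ⟫ < d₁) :
    ∀ γ : H, ‖γ‖ = 1 → T γ γ ≠ T γhat γhat →
      ‖T γhat γhat - μhatE‖ < ‖T γ γ - μhatE‖ := by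
  intro γ hγ hne
  -- bilinear form formula
  have hB : ∀ u v : H, ⟪μhat u, v⟫ = (n : ℝ)⁻¹ * ∑ i, ⟪X i, u⟫ * ⟪X i, v⟫ := by
    intro u v
    subst hμ
    simp [ContinuousLinearMap.sum_apply, sum_inner, real_inner_smul_left,
      Finset.mul_sum]
  have hsym : ∀ u v : H, ⟪μhat u, v⟫ = ⟪μhat v, u⟫ := by
    intro u v
    rw [hB, hB]
    congr 1
    exact Finset.sum_congr rfl fun i _ => mul_comm _ _
  -- inner with μhatE
  have hTμ : ∀ u : H, ⟪T u u, μhatE⟫ = ⟪μhat u, u⟫ := by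
    intro u
    subst hμE
    rw [hB]
    rw [real_inner_smul_right, inner_sum]
    congr 1
    refine Finset.sum_congr rfl fun i _ => ?_
    rw [hT]
    rw [real_inner_comm u (X i)]
  have hγhat2 : ⟪γhat, γhat⟫ = 1 := by
    rw [real_inner_self_eq_norm_sq, hγhat]; norm_num
  have hd : ⟪μhat γhat, γhat⟫ = d₁ := by
    rw [heig, real_inner_smul_left, hγhat2, mul_one]
  -- key strict inequality
  have key : ⟪μhat γ, γ⟫ < d₁ := by
    set c : ℝ := ⟪γhat, γ⟫ with hc
    set w : H := γ - c • γhat with hw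
    have hγdecomp : γ = c • γhat + w := by rw [hw]; abel
    have hwperp : ⟪γhat, w⟫ = 0 := by
      rw [hw, inner_sub_right, real_inner_smul_right, hγhat2, mul_one, sub_self]
    have hμγw : ⟪μhat γhat, w⟫ = 0 := by
      rw [heig, real_inner_smul_left, hwperp, mul_zero]
    have hμwγ : ⟪μhat w, γhat⟫ = 0 := by rw [hsym]; exact hμγw
    have hpyth : c ^ 2 + ‖w‖ ^ 2 = 1 := by
      have : ‖γ‖ ^ 2 = ‖c • γhat + w‖ ^ 2 := by rw [← hγdecomp]
      rw [hγ] at this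
      rw [norm_add_sq_real, real_inner_smul_left, hwperp, mul_zero] at this
      simp [norm_smul, Real.norm_eq_abs, hγhat, sq_abs, mul_pow] at this
      linarith
    by_cases hw0 : w = 0
    · -- then γ = ± γhat, contradiction with hne
      exfalso
      apply hne
      have hγc : γ = c • γhat := by rw [hγdecomp, hw0, add_zero]
      have hc2 : c ^ 2 = 1 := by
        have := hpyth; rw [hw0] at this; simpa using this
      rw [hγc]
      simp only [map_smul, ContinuousLinearMap.smul_apply, smul_smul]
      rw [← sq, hc2, one_smul]
    · -- w ≠ 0, use hsimple on normalized w
      have hwn : ‖w‖ ≠ 0 := norm_ne_zero_iff.mpr hw0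
      have hwpos : (0 : ℝ) < ‖w‖ := norm_pos_iff.mpr hw0
      set u : H := ‖w‖⁻¹ • w with hu
      have hu1 : ‖u‖ = 1 := by
        rw [hu, norm_smul, norm_inv, norm_norm, inv_mul_cancel₀ hwn]
      have huperp : ⟪u, γhat⟫ = 0 := by
        rw [hu, real_inner_smul_left, real_inner_comm, hwperp, mul_zero]
      have hlt := hsimple u hu1 huperp
      have hww : ⟪μhat w, w⟫ = ‖w‖ ^ 2 * ⟪μhat u, u⟫ := by
        rw [hu, map_smul, real_inner_smul_left, real_inner_smul_right]
        field_simp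
      have hexp : ⟪μhat γ, γ⟫ = c ^ 2 * d₁ + ⟪μhat w, w⟫ := by
        rw [hγdecomp, map_add, map_smul,
          inner_add_left, inner_add_right, inner_add_right,
          real_inner_smul_left, real_inner_smul_left, real_inner_smul_right,
          real_inner_smul_right, hd, hμγw, hμwγ]
        ring
      have : ⟪μhat w, w⟫ < ‖w‖ ^ 2 * d₁ := by
        rw [hww]
        exact (mul_lt_mul_iff_right₀ (by positivity)).mpr hlt
      calc ⟪μhat γ, γ⟫ = c ^ 2 * d₁ + ⟪μhat w, w⟫ := hexp
        _ < c ^ 2 * d₁ + ‖w‖ ^ 2 * d₁ := by linarith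
        _ = d₁ := by rw [← add_mul, hpyth, one_mul]
  -- norms of T γ γ
  have hTnorm : ∀ u : H, ‖u‖ = 1 → ‖T u u‖ ^ 2 = 1 := by
    intro u hu
    rw [← real_inner_self_eq_norm_sq, hT, real_inner_self_eq_norm_sq, hu]
    norm_num
  have hsq : ∀ u : H, ‖u‖ = 1 →
      ‖T u u - μhatE‖ ^ 2 = 1 - 2 * ⟪μhat u, u⟫ + ‖μhatE‖ ^ 2 := by
    intro u hu
    rw [norm_sub_sq_real, hTnorm u hu, hTμ]
  have h1 := hsq γ hγ
  have h2 := hsq γhat hγhat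
  rw [hd] at h2
  have hsqlt : ‖T γhat γhat - μhatE‖ ^ 2 < ‖T γ γ - μhatE‖ ^ 2 := by
    rw [h1, h2]; linarith
  exact lt_of_pow_lt_pow_left₀ 2 (norm_nonneg _) hsqlt
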